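/- arXiv:2512.01820 — 6 statements merged into one kernel-verified Lean document; each statement's English description precedes it below -/
import Mathlib

section
/- For every continuously differentiable function g : [0,T] → ℝ with g(0) = 0 and g(T) = T', one has F(g) ≥ F(g*). That is, the scheduler g*(t) = −log(1 − t·(1 − exp(−T'))/T) minimizes the functional F among all continuously differentiable schedulers on [0,T] with boundary values g(0) = 0 and g(T) = T'. -/
/-!
With `u = exp (-g)` one has `u' = -g' exp (-g)`, so `F(g) = ∫₀^T u'²`, while the boundary
conditions fix `∫₀^T u' = u(T) - u(0) = exp (-T') - 1`. Cauchy–Schwarz gives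
`F(g) ≥ (1 - exp (-T'))² / T`, with equality exactly when `u` is affine, which is the case
`u = exp (-g*) = 1 - t (1 - exp (-T')) / T`.
-/

open Set MeasureTheory

/-- The scheduling functional `F(g) := ∫₀^T (g'(t))² · exp(−2·g(t)) dt`,
where the derivative is taken within `[0, T]`. -/
noncomputable def schedF (T : ℝ) (g : ℝ → ℝ) : ℝ :=
  ∫ t in (0:ℝ)..T, (derivWithin g (Set.Icc 0 T) t) ^ 2 * Real.exp (-2 * g t)

theorem intervalIntegral.sq_integral_le_mul_integral_sq {f : ℝ → ℝ} {a b : ℝ} (hab : a ≤ b)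
    (hf : IntervalIntegrable f volume a b)
    (hf2 : IntervalIntegrable (fun t => f t ^ 2) volume a b) :
    (∫ t in a..b, f t) ^ 2 ≤ (b - a) * ∫ t in a..b, f t ^ 2 := by
  rcases hab.eq_or_lt with rfl | hlt
  · simp
  have hba : 0 < b - a := sub_pos.2 hlt
  set I := ∫ t in a..b, f t
  set c := I / (b - a)
  have hvar : ∫ t in a..b, (f t - c) ^ 2 = (∫ t in a..b, f t ^ 2) - I ^ 2 / (b - a) := by
    have hexp : (fun t => (f t - c) ^ 2) = fun t => f t ^ 2 - 2 * c * f t + c ^ 2 := by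
      funext t; ring
    rw [hexp, intervalIntegral.integral_add (hf2.sub (hf.const_mul _)) intervalIntegrable_const,
      intervalIntegral.integral_sub hf2 (hf.const_mul _), intervalIntegral.integral_const_mul,
      intervalIntegral.integral_const, smul_eq_mul]
    simp only [c, I]
    field_simp
    ring
  have hnonneg : 0 ≤ ∫ t in a..b, (f t - c) ^ 2 :=
    intervalIntegral.integral_nonneg hab fun t _ => sq_nonneg _
  rw [hvar, sub_nonneg, div_le_iff₀ hba] at hnonneg
  linarith

theorem integral_derivWithin_Icc_eq_sub {u : ℝ → ℝ} {a b : ℝ} (hab : a < b)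
    (hu : ContDiffOn ℝ 1 u (Icc a b)) :
    ∫ t in a..b, derivWithin u (Icc a b) t = u b - u a := by
  refine intervalIntegral.integral_eq_sub_of_hasDerivAt_of_le hab.le hu.continuousOn
    (fun t ht => ?_) ?_
  · exact ((hu.differentiableOn one_ne_zero t (Ioo_subset_Icc_self ht)).hasDerivWithinAt
      ).hasDerivAt (Icc_mem_nhds ht.1 ht.2)
  · refine ContinuousOn.intervalIntegrable ?_
    rw [uIcc_of_le hab.le]
    exact hu.continuousOn_derivWithin (uniqueDiffOn_Icc hab) le_rfl

theorem schedF_eq_integral_sq_derivWithin_exp_neg {T : ℝ} (hT : 0 < T) {g : ℝ → ℝ}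
    (hg : DifferentiableOn ℝ g (Icc 0 T)) :
    schedF T g = ∫ t in (0:ℝ)..T, derivWithin (fun t => Real.exp (-g t)) (Icc 0 T) t ^ 2 := by
  refine intervalIntegral.integral_congr fun t ht => ?_
  rw [uIcc_of_le hT.le] at ht
  have hu : derivWithin (fun t => Real.exp (-g t)) (Icc 0 T) t
      = Real.exp (-g t) * -derivWithin g (Icc 0 T) t :=
    ((hg t ht).hasDerivWithinAt.neg.exp).derivWithin (uniqueDiffOn_Icc hT t ht)
  rw [hu, mul_pow, neg_sq, ← Real.exp_nat_mul]
  ring_nf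

theorem sq_exp_neg_sub_div_le_schedF {T : ℝ} (hT : 0 < T) {g : ℝ → ℝ}
    (hg : ContDiffOn ℝ 1 g (Icc 0 T)) :
    (Real.exp (-g T) - Real.exp (-g 0)) ^ 2 / T ≤ schedF T g := by
  have hu : ContDiffOn ℝ 1 (fun t => Real.exp (-g t)) (Icc 0 T) :=
    Real.contDiff_exp.comp_contDiffOn hg.neg
  have hu' : ContinuousOn (derivWithin (fun t => Real.exp (-g t)) (Icc 0 T)) (uIcc 0 T) := by
    rw [uIcc_of_le hT.le]
    exact hu.continuousOn_derivWithin (uniqueDiffOn_Icc hT) le_rfl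
  rw [schedF_eq_integral_sq_derivWithin_exp_neg hT (hg.differentiableOn one_ne_zero),
    div_le_iff₀ hT, ← integral_derivWithin_Icc_eq_sub hT hu]
  simpa [mul_comm] using intervalIntegral.sq_integral_le_mul_integral_sq hT.le
    hu'.intervalIntegrable (hu'.pow 2).intervalIntegrable

theorem schedF_neg_log_one_sub_mul_div {T a : ℝ} (hT : 0 < T) (ha : a < 1) :
    schedF T (fun t => -Real.log (1 - t * a / T)) = a ^ 2 / T := by
  have hpos : ∀ t ∈ Icc 0 T, 0 < 1 - t * a / T := fun t ⟨ht0, htT⟩ => by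
    rw [sub_pos, div_lt_one hT]
    rcases le_or_gt a 0 with ha0 | ha0 <;> nlinarith
  have hexp : EqOn (fun t => Real.exp (-(-Real.log (1 - t * a / T)))) (fun t => 1 - t * a / T)
      (Icc 0 T) := fun t ht => by simp only [neg_neg, Real.exp_log (hpos t ht)]
  have hdiff : DifferentiableOn ℝ (fun t => -Real.log (1 - t * a / T)) (Icc 0 T) :=
    fun t ht => (DifferentiableWithinAt.log (f := fun t => 1 - t * a / T) (by fun_prop)
      (hpos t ht).ne').neg
  rw [schedF_eq_integral_sq_derivWithin_exp_neg hT hdiff]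
  calc _ = ∫ _ in (0:ℝ)..T, (a / T) ^ 2 := by
        refine intervalIntegral.integral_congr fun t ht => ?_
        rw [uIcc_of_le hT.le] at ht
        have hlin : HasDerivAt (fun t => 1 - t * a / T) (-(a / T)) t := by
          simpa [mul_div_assoc] using (hasDerivAt_mul_const (a / T)).const_sub 1
        rw [derivWithin_congr hexp (hexp ht),
          hlin.hasDerivWithinAt.derivWithin (uniqueDiffOn_Icc hT t ht), neg_sq]
    _ = a ^ 2 / T := by
        rw [intervalIntegral.integral_const, smul_eq_mul, sub_zero]
        field_simp

theorem stmt_0_general (T T' : ℝ) (hT : 0 < T)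
    (gstar : ℝ → ℝ)
    (hgstar : ∀ t, gstar t = -Real.log (1 - t * (1 - Real.exp (-T')) / T))
    (g : ℝ → ℝ)
    (hg : ContDiffOn ℝ 1 g (Set.Icc 0 T))
    (hg0 : g 0 = 0) (hgT : g T = T') :
    schedF T gstar ≤ schedF T g := by
  have ha : 1 - Real.exp (-T') < 1 := sub_lt_self 1 (Real.exp_pos _)
  rw [funext hgstar, schedF_neg_log_one_sub_mul_div hT ha]
  calc (1 - Real.exp (-T')) ^ 2 / T = (Real.exp (-g T) - Real.exp (-g 0)) ^ 2 / T := by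
        rw [hgT, hg0, neg_zero, Real.exp_zero, ← neg_sub, neg_sq]
    _ ≤ schedF T g := sq_exp_neg_sub_div_le_schedF hT hg

/-- The scheduler `g*(t) = −log(1 − t·(1 − exp(−T'))/T)` minimizes the functional
`F` among all continuously differentiable schedulers on `[0,T]` with boundary values
`g(0) = 0` and `g(T) = T'`. -/
theorem stmt_0 (T T' : ℝ) (hT : 0 < T) (hT' : 0 < T')
    (gstar : ℝ → ℝ)
    (hgstar : ∀ t, gstar t = -Real.log (1 - t * (1 - Real.exp (-T')) / T))
    (g : ℝ → ℝ)
    (hg : ContDiffOn ℝ 1 g (Set.Icc 0 T))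
    (hg0 : g 0 = 0) (hgT : g T = T') :
    schedF T gstar ≤ schedF T g :=
  stmt_0_general T T' hT gstar hgstar g hg hg0 hgT
end

section
/- For every continuously differentiable function g : [0,T] → ℝ with g(0) = 0 and g(T) = T', one has F(g) ≥ (1 − exp(−T'))²/T. -/
/-! With `f := g' · exp(−g)`, the functional is `F(g) = ∫₀^T f²`, while the substitution
`u = g(t)` gives `∫₀^T f = ∫₀^{T'} exp(−u) du = 1 − exp(−T')`. Cauchy–Schwarz,
`(∫₀^T f)² ≤ T · ∫₀^T f²`, then yields the bound. -/

open Set MeasureTheory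

theorem sq_integral_div_le_integral_sq {f : ℝ → ℝ} {a b : ℝ} (hab : a < b)
    (hf : IntervalIntegrable f volume a b)
    (hf2 : IntervalIntegrable (fun x => f x ^ 2) volume a b) :
    (∫ x in a..b, f x) ^ 2 / (b - a) ≤ ∫ x in a..b, f x ^ 2 := by
  set I := ∫ x in a..b, f x
  set c := I / (b - a)
  -- integrate the pointwise bound `2 c f - c² ≤ f²`, optimal at the mean value `c`
  have hmono : ∫ x in a..b, (2 * c * f x - c ^ 2) ≤ ∫ x in a..b, f x ^ 2 :=
    intervalIntegral.integral_mono_on hab.le ((hf.const_mul _).sub intervalIntegrable_const) hf2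
      fun x _ => by nlinarith [sq_nonneg (f x - c)]
  calc I ^ 2 / (b - a) = ∫ x in a..b, (2 * c * f x - c ^ 2) := by
        rw [intervalIntegral.integral_sub (hf.const_mul _) intervalIntegrable_const,
          intervalIntegral.integral_const_mul, intervalIntegral.integral_const, smul_eq_mul]
        change I ^ 2 / (b - a) = 2 * (I / (b - a)) * I - (b - a) * (I / (b - a)) ^ 2
        field_simp
        ring
    _ ≤ ∫ x in a..b, f x ^ 2 := hmono

theorem integral_comp_mul_derivWithin_Icc {g φ : ℝ → ℝ} {a b : ℝ} (hab : a < b)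
    (hg : ContDiffOn ℝ 1 g (Icc a b)) (hφ : Continuous φ) :
    ∫ x in a..b, φ (g x) * derivWithin g (Icc a b) x = ∫ u in g a..g b, φ u := by
  have hIcc : uIcc a b = Icc a b := uIcc_of_le hab.le
  have hderiv : ∀ x ∈ Ioo (min a b) (max a b),
      HasDerivWithinAt g (derivWithin g (Icc a b) x) (Ioi x) x := by
    rw [min_eq_left hab.le, max_eq_right hab.le]
    intro x hx
    exact ((hg.differentiableOn one_ne_zero x (Ioo_subset_Icc_self hx)).hasDerivWithinAt
      |>.hasDerivAt (Icc_mem_nhds hx.1 hx.2)).hasDerivWithinAt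
  have hderiv_cont : ContinuousOn (derivWithin g (Icc a b)) (uIcc a b) :=
    hIcc ▸ hg.continuousOn_derivWithin (uniqueDiffOn_Icc hab) le_rfl
  exact intervalIntegral.integral_comp_mul_deriv'' (hIcc ▸ hg.continuousOn) hderiv hderiv_cont
    hφ.continuousOn

theorem stmt_1_general (T T' : ℝ) (hT : 0 < T)
    (g : ℝ → ℝ)
    (hg : ContDiffOn ℝ 1 g (Set.Icc 0 T))
    (hg0 : g 0 = 0) (hgT : g T = T') :
    (1 - Real.exp (-T')) ^ 2 / T ≤ schedF T g := by
  set f : ℝ → ℝ := fun t => Real.exp (-g t) * derivWithin g (Icc 0 T) t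
  have hf_cont : ContinuousOn f (Icc 0 T) :=
    (Real.continuous_exp.comp_continuousOn hg.continuousOn.neg).mul
      (hg.continuousOn_derivWithin (uniqueDiffOn_Icc hT) le_rfl)
  have hf_integral : ∫ t in (0:ℝ)..T, f t = 1 - Real.exp (-T') := by
    rw [integral_comp_mul_derivWithin_Icc (φ := fun u => Real.exp (-u)) hT hg
      (Real.continuous_exp.comp continuous_neg), hg0, hgT, intervalIntegral.integral_comp_neg,
      integral_exp]
    simp
  have hF : schedF T g = ∫ t in (0:ℝ)..T, f t ^ 2 :=
    intervalIntegral.integral_congr fun t _ => by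
      simp only [f, mul_pow, ← Real.exp_nat_mul]
      ring_nf
  have hCS := sq_integral_div_le_integral_sq hT (hf_cont.intervalIntegrable_of_Icc hT.le)
    ((hf_cont.pow 2).intervalIntegrable_of_Icc hT.le)
  rwa [hf_integral, sub_zero, ← hF] at hCS

/-- For every continuously differentiable `g : [0,T] → ℝ` with `g(0) = 0` and
`g(T) = T'`, one has `F(g) ≥ (1 − exp(−T'))²/T`. -/
theorem stmt_1 (T T' : ℝ) (hT : 0 < T) (hT' : 0 < T')
    (g : ℝ → ℝ)
    (hg : ContDiffOn ℝ 1 g (Set.Icc 0 T))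
    (hg0 : g 0 = 0) (hgT : g T = T') :
    (1 - Real.exp (-T')) ^ 2 / T ≤ schedF T g :=
  stmt_1_general T T' hT g hg hg0 hgT
end

section
/- If g : [0,T] → ℝ is twice differentiable with g''(t) = (g'(t))² for all t ∈ [0,T], and g(0) = 0, g(T) = T', then g(t) = g*(t) for all t ∈ [0,T]. In particular, g* itself satisfies the Euler–Lagrange equation g*''(t) = (g*'(t))² on [0,T]. -/
/-!
Substituting `u = exp (-g)` turns `g'' = g'²` into `u'' = 0`, so `exp (-g)` is affine on
`[0, T]`, and the boundary values `g 0 = 0`, `g T = T'` make it `1 - c t` with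
`c = (1 - exp (-T')) / T`, i.e. `g = g*`. The function `-log (1 - c t)` has derivative
`c / (1 - c t)`, hence satisfies `g'' = g'²`, wherever `1 - c t ≠ 0`; on `[0, T]` this holds
because `1 - c t = exp (-g t) > 0`.
-/

open Set Real Filter Topology

theorem eq_of_hasDerivWithinAt_zero_Icc {f : ℝ → ℝ} {a b : ℝ}
    (hf : ∀ x ∈ Icc a b, HasDerivWithinAt f 0 (Icc a b) x) :
    ∀ x ∈ Icc a b, f x = f a :=
  constant_of_has_deriv_right_zero (fun x hx => (hf x hx).continuousWithinAt) fun x hx =>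
    (hf x (Ico_subset_Icc_self hx)).mono_of_mem_nhdsWithin (Icc_mem_nhdsGE_of_mem hx)

theorem eq_add_mul_sub_of_hasDerivWithinAt_Icc {f f' : ℝ → ℝ} {a b : ℝ}
    (hf : ∀ x ∈ Icc a b, HasDerivWithinAt f (f' x) (Icc a b) x)
    (hf' : ∀ x ∈ Icc a b, HasDerivWithinAt f' 0 (Icc a b) x) :
    ∀ x ∈ Icc a b, f x = f a + f' a * (x - a) := by
  have hslope := eq_of_hasDerivWithinAt_zero_Icc hf'
  have hline : ∀ x ∈ Icc a b,
      HasDerivWithinAt (fun x => f x - f' a * (x - a)) 0 (Icc a b) x := fun x hx =>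
    ((hf x hx).fun_sub (((hasDerivAt_id' x).hasDerivWithinAt.sub_const a).const_mul (f' a))
      ).congr_deriv (by rw [hslope x hx]; ring)
  intro x hx
  have := eq_of_hasDerivWithinAt_zero_Icc hline x hx
  simp only [sub_self, mul_zero, sub_zero] at this
  linarith

theorem exp_neg_eq_of_hasDerivWithinAt_of_eq_sq {g g' g'' : ℝ → ℝ} {a b : ℝ}
    (hg : ∀ t ∈ Icc a b, HasDerivWithinAt g (g' t) (Icc a b) t)
    (hg' : ∀ t ∈ Icc a b, HasDerivWithinAt g' (g'' t) (Icc a b) t)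
    (hode : ∀ t ∈ Icc a b, g'' t = g' t ^ 2) :
    ∀ t ∈ Icc a b, exp (-g t) = exp (-g a) - g' a * exp (-g a) * (t - a) := by
  have hu : ∀ t ∈ Icc a b, HasDerivWithinAt (fun t => exp (-g t))
      (-(g' t * exp (-g t))) (Icc a b) t :=
    fun t ht => (hg t ht).fun_neg.exp.congr_deriv (by ring)
  have hu' : ∀ t ∈ Icc a b, HasDerivWithinAt (fun t => -(g' t * exp (-g t))) 0 (Icc a b) t :=
    fun t ht => ((hg' t ht).fun_mul (hg t ht).fun_neg.exp).fun_neg.congr_deriv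
      (by rw [hode t ht]; ring)
  intro t ht
  rw [eq_add_mul_sub_of_hasDerivWithinAt_Icc hu hu' t ht]
  ring

theorem hasDerivAt_neg_log_one_sub_mul {c t : ℝ} (ht : 1 - c * t ≠ 0) :
    HasDerivAt (fun s => -log (1 - c * s)) (c / (1 - c * t)) t :=
  ((((hasDerivAt_id' t).const_mul c).const_sub 1).log ht).fun_neg.congr_deriv (by field_simp)

theorem deriv_deriv_neg_log_one_sub_mul {c t : ℝ} (ht : 1 - c * t ≠ 0) :
    deriv (deriv fun s => -log (1 - c * s)) t = deriv (fun s => -log (1 - c * s)) t ^ 2 := by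
  have hopen : IsOpen {s : ℝ | 1 - c * s ≠ 0} :=
    isOpen_ne_fun (by fun_prop) continuous_const
  have hderiv : deriv (fun s => -log (1 - c * s)) =ᶠ[𝓝 t] fun s => c / (1 - c * s) :=
    eventually_of_mem (hopen.mem_nhds ht) fun s hs => (hasDerivAt_neg_log_one_sub_mul hs).deriv
  have hquot : HasDerivAt (fun s => c / (1 - c * s)) (c ^ 2 / (1 - c * t) ^ 2) t :=
    ((hasDerivAt_const t c).fun_div (((hasDerivAt_id' t).const_mul c).const_sub 1) ht
      ).congr_deriv (by ring)
  rw [hderiv.deriv_eq, hquot.deriv, (hasDerivAt_neg_log_one_sub_mul ht).deriv, div_pow]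

theorem stmt_4_general (T T' : ℝ)
    (gstar : ℝ → ℝ)
    (hgstar : ∀ t, gstar t = -Real.log (1 - t * (1 - Real.exp (-T')) / T))
    (g g' g'' : ℝ → ℝ)
    (hg1 : ∀ t ∈ Set.Icc 0 T, HasDerivWithinAt g (g' t) (Set.Icc 0 T) t)
    (hg2 : ∀ t ∈ Set.Icc 0 T, HasDerivWithinAt g' (g'' t) (Set.Icc 0 T) t)
    (hode : ∀ t ∈ Set.Icc 0 T, g'' t = (g' t) ^ 2)
    (hg0 : g 0 = 0) (hgT : g T = T') :
    (∀ t ∈ Set.Icc 0 T, g t = gstar t) ∧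
    (∀ t ∈ Set.Icc 0 T, deriv (deriv gstar) t = (deriv gstar t) ^ 2) := by
  have hexp := exp_neg_eq_of_hasDerivWithinAt_of_eq_sq hg1 hg2 hode
  simp only [hg0, neg_zero, exp_zero, mul_one, sub_zero] at hexp
  have hgstar' : gstar = fun s => -log (1 - (1 - exp (-T')) / T * s) := by
    funext s
    rw [hgstar]
    ring_nf
  have hu : ∀ t ∈ Icc 0 T, exp (-g t) = 1 - (1 - exp (-T')) / T * t := by
    intro t ht
    have hslope : g' 0 * T = 1 - exp (-T') := by
      linarith [hgT ▸ hexp T ⟨ht.1.trans ht.2, le_rfl⟩]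
    rcases eq_or_ne T 0 with rfl | hT
    · simp [le_antisymm ht.2 ht.1, hg0]
    · rw [hexp t ht, ← hslope, mul_div_cancel_right₀ _ hT]
  refine ⟨fun t ht => ?_, fun t ht => ?_⟩
  · simp only [hgstar', ← hu t ht, log_exp, neg_neg]
  · rw [hgstar']
    exact deriv_deriv_neg_log_one_sub_mul (hu t ht ▸ (exp_pos _).ne')

/-- If `g : [0,T] → ℝ` is twice differentiable with `g''(t) = (g'(t))²` on `[0,T]`,
`g(0) = 0` and `g(T) = T'`, then `g = g*` on `[0,T]`. In particular, `g*` itself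
satisfies the Euler–Lagrange equation `g*''(t) = (g*'(t))²` on `[0,T]`. -/
theorem stmt_4 (T T' : ℝ) (hT : 0 < T) (hT' : 0 < T')
    (gstar : ℝ → ℝ)
    (hgstar : ∀ t, gstar t = -Real.log (1 - t * (1 - Real.exp (-T')) / T))
    (g g' g'' : ℝ → ℝ)
    (hg1 : ∀ t ∈ Set.Icc 0 T, HasDerivWithinAt g (g' t) (Set.Icc 0 T) t)
    (hg2 : ∀ t ∈ Set.Icc 0 T, HasDerivWithinAt g' (g'' t) (Set.Icc 0 T) t)
    (hode : ∀ t ∈ Set.Icc 0 T, g'' t = (g' t) ^ 2)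
    (hg0 : g 0 = 0) (hgT : g T = T') :
    (∀ t ∈ Set.Icc 0 T, g t = gstar t) ∧
    (∀ t ∈ Set.Icc 0 T, deriv (deriv gstar) t = (deriv gstar t) ^ 2) :=
  stmt_4_general T T' gstar hgstar g g' g'' hg1 hg2 hode hg0 hgT
end

section
/- The function ρ satisfies the Fokker–Planck equation of the scheduled Ornstein–Uhlenbeck process: for all t ≥ 0 and x ∈ ℝ, ∂_t ρ(t,x) = g'(t)·( ∂_x( x·ρ(t,x) ) + (1/2)·∂²_{xx} ρ(t,x) ). Moreover, if g(0) = 0 then ρ(0,·) is the density of the Gaussian distribution N(μ, σ²). -/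
/-!
In the intrinsic time `a = g t` the density is the Gaussian density `φ(m, v, x)` with
`m a = e^{-a} μ` and `v a = 1/2 + e^{-2a} (σ² - 1/2)`, which solve `m' = -m`, `v' = 1 - 2v`.
By the chain rule it suffices that `∂_a φ = ∂_x (x φ) + ½ ∂²_x φ` along this curve. Since
`∂_m φ = -∂_x φ` and `∂_v φ = ½ ∂²_x φ` (heat equation), this reduces to the identity
`(x - m) ∂_x φ + v ∂²_x φ + φ = 0`, immediate from `∂_x φ = -(x - m)/v · φ`.
-/

open Real

noncomputable def gaussianDensity (m v x : ℝ) : ℝ :=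
  (√(2 * π * v))⁻¹ * exp (-(x - m) ^ 2 / (2 * v))

lemma gaussianPDFReal_eq_gaussianDensity (m : ℝ) {v : ℝ} (hv : 0 ≤ v) (x : ℝ) :
    ProbabilityTheory.gaussianPDFReal m v.toNNReal x = gaussianDensity m v x := by
  rw [ProbabilityTheory.gaussianPDFReal, Real.coe_toNNReal _ hv, gaussianDensity]

lemma hasDerivAt_gaussianDensity (m v x : ℝ) :
    HasDerivAt (gaussianDensity m v) (-(x - m) / v * gaussianDensity m v x) x :=
  ((((hasDerivAt_id' x).sub_const m).pow 2).neg.div_const (2 * v)).exp.const_mul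
    (√(2 * π * v))⁻¹ |>.congr_deriv
      (by simp only [gaussianDensity, Pi.neg_apply, Pi.pow_apply]; ring)

lemma deriv_gaussianDensity (m v : ℝ) :
    deriv (gaussianDensity m v) = fun x => -(x - m) / v * gaussianDensity m v x :=
  funext fun x => (hasDerivAt_gaussianDensity m v x).deriv

lemma deriv_mul_gaussianDensity (m v x : ℝ) :
    deriv (fun y => y * gaussianDensity m v y) x = (1 - x * (x - m) / v) * gaussianDensity m v x :=
  ((hasDerivAt_id' x).mul (hasDerivAt_gaussianDensity m v x)).deriv.trans (by ring)

lemma deriv_deriv_gaussianDensity (m v x : ℝ) :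
    deriv (deriv (gaussianDensity m v)) x =
      ((x - m) ^ 2 / v ^ 2 - 1 / v) * gaussianDensity m v x := by
  rw [deriv_gaussianDensity]
  exact ((((hasDerivAt_id' x).sub_const m).neg.div_const v).mul
    (hasDerivAt_gaussianDensity m v x)).deriv.trans (by simp only [Pi.neg_apply]; ring)

lemma HasDerivAt.inv_sqrt_two_pi_mul {v : ℝ → ℝ} {v' a : ℝ} (hv : HasDerivAt v v' a)
    (hva : 0 < v a) :
    HasDerivAt (fun b => (√(2 * π * v b))⁻¹) (-(v' / (2 * v a)) * (√(2 * π * v a))⁻¹) a := by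
  have hpos : 0 < 2 * π * v a := by positivity
  refine ((hv.const_mul (2 * π)).sqrt hpos.ne').inv (Real.sqrt_pos.mpr hpos).ne' |>.congr_deriv ?_
  rw [Real.sq_sqrt hpos.le]
  field_simp

theorem HasDerivAt.gaussianDensity {m v : ℝ → ℝ} {m' v' a : ℝ} (x : ℝ) (hm : HasDerivAt m m' a)
    (hv : HasDerivAt v v' a) (hva : 0 < v a) :
    HasDerivAt (fun b => gaussianDensity (m b) (v b) x)
      (((x - m a) / v a * m' + ((x - m a) ^ 2 / (2 * v a ^ 2) - 1 / (2 * v a)) * v') *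
        gaussianDensity (m a) (v a) x) a := by
  refine (hv.inv_sqrt_two_pi_mul hva).mul
    ((((hasDerivAt_const a x).sub hm).pow 2).neg.div (hv.const_mul 2) (by positivity)).exp
    |>.congr_deriv ?_
  simp only [_root_.gaussianDensity, Pi.neg_apply, Pi.pow_apply, Pi.sub_apply, Pi.div_apply]
  field_simp
  ring

theorem hasDerivAt_gaussianDensity_fokkerPlanck {m v : ℝ → ℝ} {a : ℝ} (x : ℝ)
    (hm : HasDerivAt m (-m a) a) (hv : HasDerivAt v (1 - 2 * v a) a) (hva : 0 < v a) :
    HasDerivAt (fun b => gaussianDensity (m b) (v b) x)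
      (deriv (fun y => y * gaussianDensity (m a) (v a) y) x +
        1 / 2 * deriv (deriv (gaussianDensity (m a) (v a))) x) a := by
  refine (hm.gaussianDensity x hv hva).congr_deriv ?_
  rw [deriv_mul_gaussianDensity, deriv_deriv_gaussianDensity]
  field_simp
  ring

noncomputable def ouMean (μ a : ℝ) : ℝ := exp (-a) * μ

noncomputable def ouVariance (σ a : ℝ) : ℝ := 1 / 2 + exp (-2 * a) * (σ ^ 2 - 1 / 2)

lemma hasDerivAt_ouMean (μ a : ℝ) : HasDerivAt (ouMean μ) (-ouMean μ a) a :=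
  ((hasDerivAt_neg' a).exp.mul_const μ).congr_deriv (by rw [ouMean]; ring)

lemma hasDerivAt_ouVariance (σ a : ℝ) :
    HasDerivAt (ouVariance σ) (1 - 2 * ouVariance σ a) a :=
  (((hasDerivAt_id' a).const_mul (-2)).exp.mul_const _).const_add _ |>.congr_deriv
    (by rw [ouVariance]; ring)

-- `ouVariance σ a` is a convex combination of `1/2` and `σ²`.
lemma ouVariance_pos {σ a : ℝ} (hσ : σ ≠ 0) (ha : 0 ≤ a) : 0 < ouVariance σ a := by
  have he : exp (-2 * a) ≤ 1 := exp_le_one_iff.mpr (by linarith)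
  have hσ2 : 0 < σ ^ 2 := by positivity
  rw [ouVariance]
  nlinarith [exp_pos (-2 * a)]

@[simp] lemma ouMean_zero (μ : ℝ) : ouMean μ 0 = μ := by simp [ouMean]

@[simp] lemma ouVariance_zero (σ : ℝ) : ouVariance σ 0 = σ ^ 2 := by simp [ouVariance]

/-- The Gaussian marginal density `ρ(t,x)` of the scheduled Ornstein–Uhlenbeck process
started at `N(μ, σ²)` satisfies the Fokker–Planck equation
`∂_t ρ = g'(t)·( ∂_x( x·ρ ) + (1/2)·∂²_{xx} ρ )` for all `t ≥ 0`, `x ∈ ℝ`; moreover,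
if `g(0) = 0` then `ρ(0,·)` is the density of the Gaussian distribution `N(μ, σ²)`. -/
theorem stmt_7 (μ σ : ℝ) (hσ : 0 < σ) (g : ℝ → ℝ)
    (hg_diff : ∀ t ∈ Set.Ici (0:ℝ), DifferentiableWithinAt ℝ g (Set.Ici 0) t)
    (hg_nonneg : ∀ t ∈ Set.Ici (0:ℝ), 0 ≤ g t)
    (M V : ℝ → ℝ) (ρ : ℝ → ℝ → ℝ)
    (hM : ∀ t, M t = Real.exp (-(g t)) * μ)
    (hV : ∀ t, V t = 1 / 2 + Real.exp (-2 * g t) * (σ ^ 2 - 1 / 2))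
    (hρ : ∀ t x, ρ t x =
      (Real.sqrt (2 * Real.pi * V t))⁻¹ * Real.exp (-((x - M t) ^ 2) / (2 * V t))) :
    (∀ t ∈ Set.Ici (0:ℝ), ∀ x : ℝ,
      derivWithin (fun s => ρ s x) (Set.Ici 0) t =
        derivWithin g (Set.Ici 0) t *
          (deriv (fun y => y * ρ t y) x + (1 / 2) * deriv (deriv (fun y => ρ t y)) x)) ∧
    (g 0 = 0 → ∀ x : ℝ,
      ρ 0 x = ProbabilityTheory.gaussianPDFReal μ (Real.toNNReal (σ ^ 2)) x) := by
  obtain rfl : ρ = fun t => gaussianDensity (ouMean μ (g t)) (ouVariance σ (g t)) := by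
    funext t x
    rw [hρ, hM, hV]
    rfl
  refine ⟨fun t ht x => ?_, fun hg0 x => ?_⟩
  · have hFP := hasDerivAt_gaussianDensity_fokkerPlanck x (hasDerivAt_ouMean μ (g t))
      (hasDerivAt_ouVariance σ (g t)) (ouVariance_pos hσ.ne' (hg_nonneg t ht))
    exact ((hFP.comp_hasDerivWithinAt t (hg_diff t ht).hasDerivWithinAt).derivWithin
      (uniqueDiffOn_Ici 0 t ht)).trans (mul_comm _ _)
  · simp only [hg0, ouMean_zero, ouVariance_zero,
      gaussianPDFReal_eq_gaussianDensity μ (sq_nonneg σ)]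
end

section
/- For all x, v ∈ ℝ^d, the second directional derivative of log p satisfies |D²(log p)(x)[v,v]| ≤ ( 1/s + (max_{i,j} ‖μ_i − μ_j‖²)/s² )·‖v‖². In particular, the Hessian of the log-density of any finite Gaussian mixture with common covariance s·I has operator norm bounded by 1/s + (max_{i,j} ‖μ_i − μ_j‖²)/s², uniformly in x and independently of the dimension d and the number N of components. -/
/-! Along the line `t ↦ x + t • v` the Gaussian exponents are quadratic in `t` with the common
leading coefficient `-‖v‖² / (2s)`, so `log p (x + t • v) = log (∑ gᵢ exp (aᵢ t)) - ‖v‖² t² / (2s)`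
with `aᵢ = -⟪x - μᵢ, v⟫ / s`. The second derivative of the log-sum-exp term is the variance of the
`aᵢ` under the weights `gᵢ / ∑ g`, namely `∑ᵢⱼ gᵢ gⱼ (aᵢ - aⱼ)² / (2 (∑ g)²)`, which lies between
`0` and `maxᵢⱼ (aᵢ - aⱼ)² ≤ D2 ‖v‖² / s²` by Cauchy–Schwarz. -/

open Real

theorem iteratedFDeriv_apply_const_eq_iteratedDeriv_add_smul {𝕜 E F : Type*}
    [NontriviallyNormedField 𝕜] [NormedAddCommGroup E] [NormedSpace 𝕜 E]
    [NormedAddCommGroup F] [NormedSpace 𝕜 F]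
    {n : ℕ} {f : E → F} (hf : ContDiff 𝕜 n f) (x v : E) :
    iteratedFDeriv 𝕜 n f x (fun _ => v) = iteratedDeriv n (fun t : 𝕜 => f (x + t • v)) 0 := by
  have hline : (fun t : 𝕜 => f (x + t • v)) =
      (fun y => f (x + y)) ∘ ContinuousLinearMap.smulRight (ContinuousLinearMap.id 𝕜 𝕜) v := by
    funext t; simp
  have htrans : ContDiff 𝕜 n (fun y => f (x + y)) := hf.comp (contDiff_const.add contDiff_id)
  rw [iteratedDeriv_eq_iteratedFDeriv, hline,
    ContinuousLinearMap.iteratedFDeriv_comp_right _ htrans _ le_rfl]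
  simp [iteratedFDeriv_comp_add_left]

section LogSumExp

variable {ι : Type*} [Fintype ι]

theorem hasDerivAt_sum_mul_exp_mul (g a : ι → ℝ) (t : ℝ) :
    HasDerivAt (fun t => ∑ i, g i * exp (a i * t)) (∑ i, g i * a i * exp (a i * t)) t := by
  refine HasDerivAt.fun_sum fun i _ => ?_
  exact ((((hasDerivAt_id' t).const_mul (a i)).exp).const_mul (g i)).congr_deriv (by ring)

theorem sum_sum_mul_mul_sub_sq (g a : ι → ℝ) :
    ∑ i, ∑ j, g i * g j * (a i - a j) ^ 2 =
      2 * ((∑ i, g i) * ∑ i, g i * a i ^ 2 - (∑ i, g i * a i) ^ 2) := by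
  have hexpand : ∀ i j, g i * g j * (a i - a j) ^ 2 =
      g j * (g i * a i ^ 2) - 2 * (g i * a i) * (g j * a j) + g i * (g j * a j ^ 2) :=
    fun i j => by ring
  simp only [hexpand, Finset.sum_add_distrib, Finset.sum_sub_distrib, ← Finset.mul_sum,
    ← Finset.sum_mul]
  ring

theorem iteratedDeriv_two_log_sum_mul_exp_mul [Nonempty ι] {g : ι → ℝ} (hg : ∀ i, 0 < g i)
    (a : ι → ℝ) :
    iteratedDeriv 2 (fun t => log (∑ i, g i * exp (a i * t))) 0 =
      (∑ i, ∑ j, g i * g j * (a i - a j) ^ 2) / (2 * (∑ i, g i) ^ 2) := by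
  set S := fun t => ∑ i, g i * exp (a i * t)
  have hS : ∀ t, 0 < S t := fun t =>
    Finset.sum_pos (fun i _ => mul_pos (hg i) (exp_pos _)) Finset.univ_nonempty
  have hderiv : deriv (fun t => log (S t)) = fun t => (∑ i, g i * a i * exp (a i * t)) / S t :=
    funext fun t => ((hasDerivAt_sum_mul_exp_mul g a t).log (hS t).ne').deriv
  have hderiv2 := (hasDerivAt_sum_mul_exp_mul (fun i => g i * a i) a 0).fun_div
    (hasDerivAt_sum_mul_exp_mul g a 0) (hS 0).ne'
  rw [iteratedDeriv_succ, iteratedDeriv_one, hderiv, hderiv2.deriv, sum_sum_mul_mul_sub_sq]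
  have hQ : (∑ i, g i) ≠ 0 := by simpa [S] using (hS 0).ne'
  simp only [mul_zero, exp_zero, mul_one]
  field_simp

theorem sum_sum_mul_mul_le_mul_sq {g : ι → ℝ} (hg : ∀ i, 0 ≤ g i) {c : ι → ι → ℝ} {B : ℝ}
    (hc : ∀ i j, c i j ≤ B) :
    ∑ i, ∑ j, g i * g j * c i j ≤ B * (∑ i, g i) ^ 2 :=
  calc ∑ i, ∑ j, g i * g j * c i j
      ≤ ∑ i, ∑ j, g i * g j * B := by
        gcongr with i _ j _
        · exact mul_nonneg (hg i) (hg j)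
        · exact hc i j
    _ = B * (∑ i, g i) ^ 2 := by
        simp only [← Finset.sum_mul, ← Finset.mul_sum]
        ring

end LogSumExp

noncomputable def gaussianMixture {ι E : Type*} [Fintype ι] [NormedAddCommGroup E]
    (w : ι → ℝ) (μ : ι → E) (s : ℝ) (x : E) : ℝ :=
  ∑ i, w i * exp (-‖x - μ i‖ ^ 2 / (2 * s))

section GaussianMixture

variable {ι E : Type*} [Fintype ι] [NormedAddCommGroup E] {w : ι → ℝ} {μ : ι → E} {s : ℝ}

theorem gaussianMixture_pos [Nonempty ι] (hw : ∀ i, 0 < w i) (x : E) :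
    0 < gaussianMixture w μ s x :=
  Finset.sum_pos (fun i _ => mul_pos (hw i) (exp_pos _)) Finset.univ_nonempty

variable [InnerProductSpace ℝ E]

theorem contDiff_gaussianMixture {n : WithTop ℕ∞} : ContDiff ℝ n (gaussianMixture w μ s) :=
  ContDiff.sum fun _ _ => contDiff_const.mul
    (((contDiff_id.sub contDiff_const).norm_sq ℝ).neg.div_const _).exp

theorem norm_add_smul_sub_sq (x v μ : E) (t : ℝ) :
    ‖x + t • v - μ‖ ^ 2 = ‖x - μ‖ ^ 2 + 2 * t * inner ℝ (x - μ) v + t ^ 2 * ‖v‖ ^ 2 := by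
  rw [add_sub_right_comm, norm_add_sq_real, real_inner_smul_right, norm_smul, mul_pow,
    Real.norm_eq_abs, sq_abs]
  ring

theorem gaussianMixture_add_smul (x v : E) (t : ℝ) :
    gaussianMixture w μ s (x + t • v) =
      (∑ i, w i * exp (-‖x - μ i‖ ^ 2 / (2 * s)) * exp (-inner ℝ (x - μ i) v / s * t)) *
        exp (-(‖v‖ ^ 2 / (2 * s)) * t ^ 2) := by
  simp only [gaussianMixture, Finset.sum_mul, mul_assoc, ← exp_add, norm_add_smul_sub_sq]
  congr! 3
  ring

theorem iteratedDeriv_two_log_gaussianMixture_add_smul [Nonempty ι] (hw : ∀ i, 0 < w i)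
    (x v : E) :
    iteratedDeriv 2 (fun t : ℝ => log (gaussianMixture w μ s (x + t • v))) 0 =
      (∑ i, ∑ j, w i * exp (-‖x - μ i‖ ^ 2 / (2 * s)) * (w j * exp (-‖x - μ j‖ ^ 2 / (2 * s))) *
        (inner ℝ (μ i - μ j) v / s) ^ 2) / (2 * gaussianMixture w μ s x ^ 2) - ‖v‖ ^ 2 / s := by
  set g : ι → ℝ := fun i => w i * exp (-‖x - μ i‖ ^ 2 / (2 * s))
  set a : ι → ℝ := fun i => -inner ℝ (x - μ i) v / s
  have hg : ∀ i, 0 < g i := fun i => mul_pos (hw i) (exp_pos _)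
  have hS : ∀ t, 0 < ∑ i, g i * exp (a i * t) := fun t =>
    Finset.sum_pos (fun i _ => mul_pos (hg i) (exp_pos _)) Finset.univ_nonempty
  have hline : (fun t : ℝ => log (gaussianMixture w μ s (x + t • v))) =
      fun t => log (∑ i, g i * exp (a i * t)) + -(‖v‖ ^ 2 / (2 * s)) * t ^ 2 := by
    funext t
    rw [gaussianMixture_add_smul, log_mul (hS t).ne' (exp_pos _).ne', log_exp]
  have hsmooth : ContDiff ℝ 2 fun t => log (∑ i, g i * exp (a i * t)) :=
    (ContDiff.sum fun i _ => by fun_prop).log fun t => (hS t).ne'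
  have ha : ∀ i j, a i - a j = inner ℝ (μ i - μ j) v / s := fun i j => by
    rw [show μ i - μ j = (x - μ j) - (x - μ i) by abel, inner_sub_left]
    ring
  rw [hline, iteratedDeriv_fun_add hsmooth.contDiffAt (by fun_prop),
    iteratedDeriv_two_log_sum_mul_exp_mul hg]
  simp only [ha, iteratedDeriv_const_mul_field, iteratedDeriv_pow, g, gaussianMixture]
  norm_num
  ring

theorem abs_iteratedDeriv_two_log_gaussianMixture_add_smul_le [Nonempty ι] (hw : ∀ i, 0 < w i)
    (hs : 0 < s) {D : ℝ} (hD : ∀ i j, ‖μ i - μ j‖ ^ 2 ≤ D) (x v : E) :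
    |iteratedDeriv 2 (fun t : ℝ => log (gaussianMixture w μ s (x + t • v))) 0| ≤
      (1 / s + D / s ^ 2) * ‖v‖ ^ 2 := by
  rw [iteratedDeriv_two_log_gaussianMixture_add_smul hw]
  set Q := gaussianMixture w μ s x
  set M := ∑ i, ∑ j,
    w i * exp (-‖x - μ i‖ ^ 2 / (2 * s)) * (w j * exp (-‖x - μ j‖ ^ 2 / (2 * s))) *
      (inner ℝ (μ i - μ j) v / s) ^ 2
  have hg : ∀ i, 0 ≤ w i * exp (-‖x - μ i‖ ^ 2 / (2 * s)) := fun i =>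
    (mul_pos (hw i) (exp_pos _)).le
  have hc : ∀ i j, (inner ℝ (μ i - μ j) v / s) ^ 2 ≤ D * ‖v‖ ^ 2 / s ^ 2 := fun i j => by
    rw [div_pow]
    gcongr
    calc inner ℝ (μ i - μ j) v ^ 2 ≤ (‖μ i - μ j‖ * ‖v‖) ^ 2 := by
          rw [← sq_abs]
          gcongr
          exact abs_real_inner_le_norm _ _
      _ ≤ D * ‖v‖ ^ 2 := by rw [mul_pow]; gcongr; exact hD i j
  have hM_nonneg : 0 ≤ M :=
    Finset.sum_nonneg fun i _ => Finset.sum_nonneg fun j _ =>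
      mul_nonneg (mul_nonneg (hg i) (hg j)) (sq_nonneg _)
  have hM_le : M ≤ D * ‖v‖ ^ 2 / s ^ 2 * Q ^ 2 := sum_sum_mul_mul_le_mul_sq hg hc
  have hQ : 0 < Q := gaussianMixture_pos hw x
  have hD_nonneg : 0 ≤ D :=
    (sq_nonneg _).trans (hD (Classical.arbitrary ι) (Classical.arbitrary ι))
  have hlow : 0 ≤ M / (2 * Q ^ 2) := by positivity
  have hup : M / (2 * Q ^ 2) ≤ D * ‖v‖ ^ 2 / s ^ 2 := by
    rw [div_le_iff₀ (by positivity)]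
    nlinarith [show 0 ≤ D * ‖v‖ ^ 2 / s ^ 2 by positivity]
  have hsplit : (1 / s + D / s ^ 2) * ‖v‖ ^ 2 = ‖v‖ ^ 2 / s + D * ‖v‖ ^ 2 / s ^ 2 := by ring
  have hnorm : 0 ≤ ‖v‖ ^ 2 / s := by positivity
  rw [hsplit, abs_le]
  constructor <;> linarith

end GaussianMixture

theorem stmt_9_general (d N : ℕ) (hN : 1 ≤ N)
    (s : ℝ) (hs : 0 < s)
    (w : Fin N → ℝ) (hw : ∀ i, 0 < w i)
    (μ : Fin N → EuclideanSpace ℝ (Fin d))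
    (p : EuclideanSpace ℝ (Fin d) → ℝ)
    (hp : ∀ x, p x = ∑ i, w i * Real.exp (-‖x - μ i‖ ^ 2 / (2 * s)))
    (D2 : ℝ) (hD2 : IsGreatest {r : ℝ | ∃ i j, r = ‖μ i - μ j‖ ^ 2} D2) :
    ∀ x v : EuclideanSpace ℝ (Fin d),
      |iteratedFDeriv ℝ 2 (fun y => Real.log (p y)) x ![v, v]|
        ≤ (1 / s + D2 / s ^ 2) * ‖v‖ ^ 2 := by
  intro x v
  have : Nonempty (Fin N) := ⟨⟨0, hN⟩⟩
  obtain rfl : p = gaussianMixture w μ s := funext hp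
  have hsmooth : ContDiff ℝ 2 fun y => log (gaussianMixture w μ s y) :=
    contDiff_gaussianMixture.log fun y => (gaussianMixture_pos hw y).ne'
  have hvv : ![v, v] = fun _ => v := by
    ext i : 1
    fin_cases i <;> rfl
  rw [hvv, iteratedFDeriv_apply_const_eq_iteratedDeriv_add_smul hsmooth]
  exact abs_iteratedDeriv_two_log_gaussianMixture_add_smul_le hw hs
    (fun i j => hD2.2 ⟨i, j, rfl⟩) x v

/-- For the Gaussian-mixture function `p(x) = Σ_i w_i · exp(−‖x − μ_i‖²/(2s))` on `ℝ^d`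
(with positive weights and common covariance `s·I`), the second directional derivative
of `log p` satisfies, for all `x, v ∈ ℝ^d`,
`|D²(log p)(x)[v,v]| ≤ (1/s + (max_{i,j} ‖μ_i − μ_j‖²)/s²)·‖v‖²`,
uniformly in `x` and independently of the dimension `d` and the number `N` of
components. -/
theorem stmt_9 (d N : ℕ) (hd : 1 ≤ d) (hN : 1 ≤ N)
    (s : ℝ) (hs : 0 < s)
    (w : Fin N → ℝ) (hw : ∀ i, 0 < w i)
    (μ : Fin N → EuclideanSpace ℝ (Fin d))
    (p : EuclideanSpace ℝ (Fin d) → ℝ)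
    (hp : ∀ x, p x = ∑ i, w i * Real.exp (-‖x - μ i‖ ^ 2 / (2 * s)))
    (D2 : ℝ) (hD2 : IsGreatest {r : ℝ | ∃ i j, r = ‖μ i - μ j‖ ^ 2} D2) :
    ∀ x v : EuclideanSpace ℝ (Fin d),
      |iteratedFDeriv ℝ 2 (fun y => Real.log (p y)) x ![v, v]|
        ≤ (1 / s + D2 / s ^ 2) * ‖v‖ ^ 2 :=
  stmt_9_general d N hN s hs w hw μ p hp D2 hD2
end

section
/- For every k with 0 ≤ k ≤ K: sup_x |v^{(k)}(x)| ≤ sup_x |φ(x)|, and v^{(k)} is Lipschitz with constant at most L_φ · exp( (1 + L) · Σ_{ℓ=k}^{K−1} s_ℓ ). (This is the gradient estimate of the paper's Lemma on the value functions of the discretized time-reversed diffusion, with s_ℓ = g(T − t_ℓ) − g(T − t_{ℓ+1}).) -/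
open Set MeasureTheory Finset

/-!
Each step `v^{(k+1)} ↦ v^{(k)}` averages `v^{(k+1)}` over a probability measure after the
drift `x ↦ e^{−s}x + (1 − e^{−s})S(x)` and an additive noise that does not depend on `x`.
Averaging preserves sup bounds, and since the noise cancels in differences, it multiplies
Lipschitz constants by that of the drift, which is at most
`e^{−s} + (1 − e^{−s})L ≤ 1 + sL ≤ e^{(1+L)s}`. Backward induction on `k` multiplies these factors.
-/

lemma abs_integral_le_of_forall_abs_le {Ω : Type*} [MeasurableSpace Ω] {μ : Measure Ω}
    [IsProbabilityMeasure μ] {f : Ω → ℝ} {C : ℝ} (hf : ∀ ω, |f ω| ≤ C) :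
    |∫ ω, f ω ∂μ| ≤ C := by
  simpa using norm_integral_le_of_norm_le_const (μ := μ) (f := f) (ae_of_all _ hf)

section MarkovStep

variable {E : Type*} [NormedAddCommGroup E] [NormedSpace ℝ E]
  [MeasurableSpace E] {μ : Measure E} [IsProbabilityMeasure μ]

noncomputable def markovStep (μ : Measure E) (D : E → E) (σ : ℝ) (f : E → ℝ) (x : E) : ℝ :=
  ∫ z, f (D x + σ • z) ∂μ

lemma abs_markovStep_le {D : E → E} {σ : ℝ} {f : E → ℝ} {C : ℝ} (hf : ∀ x, |f x| ≤ C) (x : E) :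
    |markovStep μ D σ f x| ≤ C :=
  abs_integral_le_of_forall_abs_le fun _ => hf _

lemma integrable_comp_add_smul [OpensMeasurableSpace E] {f : E → ℝ} {C M : ℝ}
    (hf_bdd : ∀ x, |f x| ≤ C) (hf_lip : ∀ x y, |f x - f y| ≤ M * ‖x - y‖) (a : E) (σ : ℝ) :
    Integrable (fun z => f (a + σ • z)) μ := by
  have hf : Continuous f := (LipschitzWith.of_dist_le' (K := M) fun x y => by
    simpa [Real.dist_eq, dist_eq_norm] using hf_lip x y).continuous
  exact .of_bound (hf.comp (by fun_prop)).aestronglyMeasurable C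
    (ae_of_all _ fun z => (Real.norm_eq_abs _).trans_le (hf_bdd _))

lemma abs_markovStep_sub_le [OpensMeasurableSpace E] {D : E → E} {σ : ℝ} {f : E → ℝ}
    {C M c : ℝ} (hM : 0 ≤ M) (hf_bdd : ∀ x, |f x| ≤ C) (hf_lip : ∀ x y, |f x - f y| ≤ M * ‖x - y‖)
    (hD : ∀ x y, ‖D x - D y‖ ≤ c * ‖x - y‖) (x y : E) :
    |markovStep μ D σ f x - markovStep μ D σ f y| ≤ M * c * ‖x - y‖ := by
  rw [markovStep, markovStep, ← integral_sub (integrable_comp_add_smul hf_bdd hf_lip _ _)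
    (integrable_comp_add_smul hf_bdd hf_lip _ _)]
  refine abs_integral_le_of_forall_abs_le fun z => ?_
  calc |f (D x + σ • z) - f (D y + σ • z)| ≤ M * ‖D x - D y‖ := by
        simpa using hf_lip (D x + σ • z) (D y + σ • z)
    _ ≤ M * (c * ‖x - y‖) := by gcongr; exact hD x y
    _ = M * c * ‖x - y‖ := by ring

end MarkovStep

lemma norm_convexComb_sub_le {E : Type*} [NormedAddCommGroup E] [NormedSpace ℝ E]
    {S : E → E} {a L : ℝ} (ha₀ : 0 ≤ a) (ha₁ : a ≤ 1)
    (hS : ∀ x y, ‖S x - S y‖ ≤ L * ‖x - y‖) (x y : E) :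
    ‖(a • x + (1 - a) • S x) - (a • y + (1 - a) • S y)‖ ≤ (a + (1 - a) * L) * ‖x - y‖ := by
  have hdiff : (a • x + (1 - a) • S x) - (a • y + (1 - a) • S y)
      = a • (x - y) + (1 - a) • (S x - S y) := by
    simp only [smul_sub]; abel
  calc ‖(a • x + (1 - a) • S x) - (a • y + (1 - a) • S y)‖
      ≤ a * ‖x - y‖ + (1 - a) * ‖S x - S y‖ := by
        rw [hdiff]
        refine (norm_add_le _ _).trans_eq ?_
        rw [norm_smul, norm_smul, Real.norm_of_nonneg ha₀, Real.norm_of_nonneg (by linarith)]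
    _ ≤ a * ‖x - y‖ + (1 - a) * (L * ‖x - y‖) := by
        gcongr
        exact hS x y
    _ = (a + (1 - a) * L) * ‖x - y‖ := by ring

lemma exp_neg_add_one_sub_exp_neg_mul_le {s L : ℝ} (hs : 0 ≤ s) (hL : 0 ≤ L) :
    Real.exp (-s) + (1 - Real.exp (-s)) * L ≤ Real.exp ((1 + L) * s) := by
  have h₁ : Real.exp (-s) ≤ 1 := Real.exp_le_one_iff.mpr (by linarith)
  have h₂ : 1 - Real.exp (-s) ≤ s := by linarith [Real.add_one_le_exp (-s)]
  calc Real.exp (-s) + (1 - Real.exp (-s)) * L ≤ 1 + s * L := by nlinarith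
    _ ≤ Real.exp (s * L) := by linarith [Real.add_one_le_exp (s * L)]
    _ ≤ Real.exp ((1 + L) * s) := Real.exp_le_exp.mpr (by nlinarith)

lemma norm_expDrift_sub_le {E : Type*} [NormedAddCommGroup E] [NormedSpace ℝ E]
    {S : E → E} {s L : ℝ} (hs : 0 ≤ s) (hL : 0 ≤ L)
    (hS : ∀ x y, ‖S x - S y‖ ≤ L * ‖x - y‖) (x y : E) :
    ‖(Real.exp (-s) • x + (1 - Real.exp (-s)) • S x)
      - (Real.exp (-s) • y + (1 - Real.exp (-s)) • S y)‖
      ≤ Real.exp ((1 + L) * s) * ‖x - y‖ :=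
  (norm_convexComb_sub_le (Real.exp_pos _).le (Real.exp_le_one_iff.mpr (by linarith)) hS x y).trans
    (by gcongr; exact exp_neg_add_one_sub_exp_neg_mul_le hs hL)

theorem stmt_14_general (d K : ℕ)
    (γ : Measure (EuclideanSpace ℝ (Fin d)))
    (hγ : γ = Measure.map (⇑(EuclideanSpace.equiv (Fin d) ℝ).symm)
      (Measure.pi fun _ : Fin d => ProbabilityTheory.gaussianReal 0 1))
    (φ : EuclideanSpace ℝ (Fin d) → ℝ) (Lφ : ℝ) (hLφ : 0 ≤ Lφ)
    (hφ_bdd : ∃ C, ∀ x, |φ x| ≤ C)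
    (hφ_lip : ∀ x y, |φ x - φ y| ≤ Lφ * ‖x - y‖)
    (s σ : ℕ → ℝ) (hs : ∀ k, 0 ≤ s k)
    (S : ℕ → EuclideanSpace ℝ (Fin d) → EuclideanSpace ℝ (Fin d))
    (L : ℝ) (hL : 0 ≤ L)
    (hS_lip : ∀ k x y, ‖S k x - S k y‖ ≤ L * ‖x - y‖)
    (v : ℕ → EuclideanSpace ℝ (Fin d) → ℝ)
    (hvK : v K = φ)
    (hrec : ∀ k < K, ∀ x, v k x =
      ∫ z, v (k + 1)
        (Real.exp (-(s k)) • x + (1 - Real.exp (-(s k))) • S k x + σ k • z) ∂γ) :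
    ∀ k ≤ K,
      (∀ x, |v k x| ≤ ⨆ y, |φ y|) ∧
      (∀ x y, |v k x - v k y| ≤
        Lφ * Real.exp ((1 + L) * ∑ ℓ ∈ Finset.Ico k K, s ℓ) * ‖x - y‖) := by
  have : IsProbabilityMeasure γ := hγ ▸ Measure.isProbabilityMeasure_map (by fun_prop)
  obtain ⟨B, hB⟩ := hφ_bdd
  have hφ_le_sup : ∀ x, |φ x| ≤ ⨆ y, |φ y| := le_ciSup ⟨B, by rintro _ ⟨y, rfl⟩; exact hB y⟩
  intro k hk
  induction hk using Nat.decreasingInduction with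
  | self => simpa [hvK] using ⟨hφ_le_sup, hφ_lip⟩
  | of_succ k hk ih =>
    obtain ⟨hbdd, hlip⟩ := ih
    have hv : v k = markovStep γ (fun x => Real.exp (-(s k)) • x + (1 - Real.exp (-(s k))) • S k x)
        (σ k) (v (k + 1)) := funext (hrec k hk)
    refine hv ▸ ⟨abs_markovStep_le hbdd, fun x y => ?_⟩
    refine (abs_markovStep_sub_le (by positivity) hbdd hlip
      (norm_expDrift_sub_le (hs k) hL (hS_lip k)) x y).trans_eq ?_
    rw [Finset.sum_eq_sum_Ico_succ_bot hk, mul_add, Real.exp_add]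
    ring

/-- Gradient estimate for the value functions of the discretized time-reversed
diffusion: with `γ` the standard Gaussian on `ℝ^d`, `φ` bounded and `L_φ`-Lipschitz,
`v^{(K)} = φ` and `v^{(k)}(x) = ∫ v^{(k+1)}(e^{−s_k}·x + (1 − e^{−s_k})·S_k(x) + σ_k·z) dγ(z)`
with each `S_k` Lipschitz with constant `L`, one has for every `0 ≤ k ≤ K`:
`sup |v^{(k)}| ≤ sup |φ|`, and `v^{(k)}` is Lipschitz with constant at most
`L_φ · exp((1 + L) · Σ_{ℓ=k}^{K−1} s_ℓ)`. -/
theorem stmt_14 (d K : ℕ) (hd : 1 ≤ d) (hK : 1 ≤ K)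
    (γ : Measure (EuclideanSpace ℝ (Fin d)))
    (hγ : γ = Measure.map (⇑(EuclideanSpace.equiv (Fin d) ℝ).symm)
      (Measure.pi fun _ : Fin d => ProbabilityTheory.gaussianReal 0 1))
    (φ : EuclideanSpace ℝ (Fin d) → ℝ) (Lφ : ℝ) (hLφ : 0 ≤ Lφ)
    (hφ_bdd : ∃ C, ∀ x, |φ x| ≤ C)
    (hφ_lip : ∀ x y, |φ x - φ y| ≤ Lφ * ‖x - y‖)
    (s σ : ℕ → ℝ) (hs : ∀ k, 0 ≤ s k) (hσ : ∀ k, 0 ≤ σ k)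
    (S : ℕ → EuclideanSpace ℝ (Fin d) → EuclideanSpace ℝ (Fin d))
    (L : ℝ) (hL : 0 ≤ L)
    (hS_lip : ∀ k x y, ‖S k x - S k y‖ ≤ L * ‖x - y‖)
    (v : ℕ → EuclideanSpace ℝ (Fin d) → ℝ)
    (hvK : v K = φ)
    (hrec : ∀ k < K, ∀ x, v k x =
      ∫ z, v (k + 1)
        (Real.exp (-(s k)) • x + (1 - Real.exp (-(s k))) • S k x + σ k • z) ∂γ) :
    ∀ k ≤ K,
      (∀ x, |v k x| ≤ ⨆ y, |φ y|) ∧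
      (∀ x y, |v k x - v k y| ≤
        Lφ * Real.exp ((1 + L) * ∑ ℓ ∈ Finset.Ico k K, s ℓ) * ‖x - y‖) :=
  stmt_14_general d K γ hγ φ Lφ hLφ hφ_bdd hφ_lip s σ hs S L hL hS_lip v hvK hrec
end
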